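/- arXiv:1812.03393 — 3 statements merged into one kernel-verified Lean document; each statement's English description precedes it below -/
import Mathlib

section
/- Let μ be a positive Borel measure on ℂ₊ such that ∫_{ℂ₊} dμ(s)/|s+w|^2 ≤ C/Re(w) for all w ∈ ℂ₊. Then for every Carleson square Q_{a,h} = {x+iy : 0 < x ≤ h, a−h/2 ≤ y ≤ a+h/2} one has μ(Q_{a,h}) ≤ C' h, where C' is an absolute constant multiple of C. -/
/-!
Test the kernel condition at `w = h - ia`. For `s` in `Q_{a,h}` we have `Re(s + w) ∈ (h, 2h]`
and `|Im(s + w)| ≤ h/2`, so `|s + w|² ≤ 5h²`. Hence `1 ≤ 5h² / |s + w|²` on the square, and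
`μ(Q_{a,h}) ≤ 5h² ∫ dμ(s)/|s + w|² ≤ 5h² · C/h = 5Ch`.
-/

open MeasureTheory Set Complex ENNReal

def carlesonSquare (a h : ℝ) : Set ℂ :=
  {z : ℂ | 0 < z.re ∧ z.re ≤ h ∧ a - h / 2 ≤ z.im ∧ z.im ≤ a + h / 2}

lemma measurableSet_carlesonSquare (a h : ℝ) : MeasurableSet (carlesonSquare a h) :=
  (measurableSet_lt measurable_const measurable_re).inter <|
    (measurableSet_le measurable_re measurable_const).inter <|
      (measurableSet_le measurable_const measurable_im).inter
        (measurableSet_le measurable_im measurable_const)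

lemma norm_add_sq_le_of_mem_carlesonSquare {a h : ℝ} {s : ℂ} (hs : s ∈ carlesonSquare a h) :
    ‖s + ⟨h, -a⟩‖ ^ 2 ≤ 5 * h ^ 2 := by
  obtain ⟨hre_pos, hre_le, him_ge, him_le⟩ := hs
  have hnorm : ‖s + ⟨h, -a⟩‖ ^ 2 = (s.re + h) ^ 2 + (s.im - a) ^ 2 := by
    rw [Complex.sq_norm, Complex.normSq_apply]
    simp only [add_re, add_im]
    ring
  rw [hnorm]
  nlinarith

lemma norm_add_pos_of_re_pos {s w : ℂ} (hs : 0 < s.re) (hw : 0 < w.re) : 0 < ‖s + w‖ :=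
  (add_pos hs hw).trans_le (re_le_norm (s + w))

lemma measure_le_mul_lintegral_of_one_le_mul {α : Type*} [MeasurableSpace α] {μ : Measure α}
    {s : Set α} (hs : MeasurableSet s) {f : α → ℝ≥0∞} {c : ℝ≥0∞} (hc : c ≠ ∞)
    (hf : ∀ x ∈ s, 1 ≤ c * f x) : μ s ≤ c * ∫⁻ x, f x ∂μ :=
  calc μ s = ∫⁻ _ in s, 1 ∂μ := (setLIntegral_one s).symm
    _ ≤ ∫⁻ x in s, c * f x ∂μ := setLIntegral_mono' hs hf
    _ ≤ ∫⁻ x, c * f x ∂μ := setLIntegral_le_lintegral s _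
    _ = c * ∫⁻ x, f x ∂μ := lintegral_const_mul' c f hc

/-- the reproducing-kernel condition `∫ dμ(s)/|s+w|² ≤ C/Re w` implies the
Carleson condition `μ(Q_{a,h}) ≤ C' h` with `C'` an absolute constant multiple of `C`. -/
theorem kernel_bound_implies_carleson :
    ∃ K : ℝ, 0 < K ∧ ∀ (μ : Measure ℂ) (C : ℝ),
      (∀ w : ℂ, 0 < w.re →
        ∫⁻ s, ENNReal.ofReal (1 / ‖s + w‖ ^ 2) ∂μ ≤ ENNReal.ofReal (C / w.re)) →
      ∀ a h : ℝ, 0 < h → μ (carlesonSquare a h) ≤ ENNReal.ofReal (K * C * h) := by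
  refine ⟨5, by norm_num, fun μ C hkernel a h hh => ?_⟩
  have hkernel_lower : ∀ s ∈ carlesonSquare a h,
      1 ≤ ENNReal.ofReal (5 * h ^ 2) * ENNReal.ofReal (1 / ‖s + ⟨h, -a⟩‖ ^ 2) := fun s hs => by
    have hpos := norm_add_pos_of_re_pos (w := ⟨h, -a⟩) hs.1 hh
    rw [← ENNReal.ofReal_mul (by positivity), ← ENNReal.ofReal_one, mul_one_div]
    exact ENNReal.ofReal_le_ofReal <|
      (one_le_div (by positivity)).2 (norm_add_sq_le_of_mem_carlesonSquare hs)
  calc μ (carlesonSquare a h)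
      ≤ ENNReal.ofReal (5 * h ^ 2) * ∫⁻ s, ENNReal.ofReal (1 / ‖s + ⟨h, -a⟩‖ ^ 2) ∂μ :=
        measure_le_mul_lintegral_of_one_le_mul (measurableSet_carlesonSquare a h)
          ofReal_ne_top hkernel_lower
    _ ≤ ENNReal.ofReal (5 * h ^ 2) * ENNReal.ofReal (C / h) := by gcongr; exact hkernel _ hh
    _ = ENNReal.ofReal (5 * C * h) := by
        rw [← ENNReal.ofReal_mul (by positivity)]
        congr 1
        field_simp
end

section
/- Let ν̃ be a positive Borel measure on [0,∞) satisfying the Δ₂-condition sup_{t>0} ν̃[0,2t)/ν̃[0,t) < ∞, and define the weight w(t) = 2π ∫_0^∞ e^{-2rt} dν̃(r). Then there is a constant c > 0 such that w(t) ≤ c·w(2t) for all t > 0. -/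
/-!
Write `L(s) = ∫_{[0,∞)} e^{-rs} dν(r)`, so that the weight is `w(t) = 2π L(2t)`.
Restricting the integral to `[0, a)` gives `ν[0,a) ≤ e^{as} L(s)`, hence `ν[0,1/s) ≤ e² L(2s)`.
Conversely, if `2^n ≤ x + 1 < 2^{n+1}` then `e^{-x} ≤ e^{1-2^n}` and `x < 2^{n+1}`, so the
Δ₂-condition gives
`L(s) ≤ ∑ₙ e^{1-2^n} ν[0, 2^{n+1}/s) ≤ (∑ₙ e^{1-2^n} D^{n+1}) ν[0,1/s)`;
the series converges because `e^{-2^n}` beats every geometric sequence.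
-/

open MeasureTheory Set ENNReal Filter Topology

theorem summable_pow_mul_exp_neg_two_pow (d : ℝ) :
    Summable fun n : ℕ => d ^ n * Real.exp (-2 ^ n) := by
  have hlim : Tendsto (fun n : ℕ => |d| * Real.exp (-2 ^ n)) atTop (𝓝 0) := by
    simpa using (Real.tendsto_exp_atBot.comp (tendsto_neg_atTop_atBot.comp
      (tendsto_pow_atTop_atTop_of_one_lt one_lt_two))).const_mul |d|
  refine summable_of_ratio_norm_eventually_le (r := 1 / 2) (by norm_num) ?_
  filter_upwards [hlim.eventually (gt_mem_nhds (by norm_num : (0:ℝ) < 1 / 2))] with n hn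
  have hexp : Real.exp (-2 ^ (n + 1)) = Real.exp (-2 ^ n) * Real.exp (-2 ^ n) := by
    rw [← Real.exp_add]; ring_nf
  simp only [norm_mul, norm_pow, Real.norm_eq_abs, abs_of_pos (Real.exp_pos _), hexp]
  calc |d| ^ (n + 1) * (Real.exp (-2 ^ n) * Real.exp (-2 ^ n))
      = (|d| ^ n * Real.exp (-2 ^ n)) * (|d| * Real.exp (-2 ^ n)) := by ring
    _ ≤ (|d| ^ n * Real.exp (-2 ^ n)) * (1 / 2) := by gcongr
    _ = 1 / 2 * (|d| ^ n * Real.exp (-2 ^ n)) := mul_comm _ _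

theorem ofReal_exp_neg_mul_le_tsum_indicator {r s : ℝ} (hr : 0 ≤ r) (hs : 0 < s) :
    ENNReal.ofReal (Real.exp (-(r * s))) ≤
      ∑' n : ℕ, (Ico 0 (2 ^ (n + 1) * s⁻¹)).indicator
        (fun _ => ENNReal.ofReal (Real.exp (1 - 2 ^ n))) r := by
  obtain ⟨n, hn, hn'⟩ := exists_nat_pow_near (x := r * s + 1) (by nlinarith) one_lt_two
  refine le_trans ?_ (ENNReal.le_tsum n)
  have hmem : r ∈ Ico 0 (2 ^ (n + 1) * s⁻¹) :=
    ⟨hr, by rw [← div_eq_mul_inv, lt_div_iff₀ hs]; linarith⟩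
  rw [indicator_of_mem hmem]
  exact ENNReal.ofReal_le_ofReal (Real.exp_le_exp.2 (by linarith))

section

variable {ν : Measure ℝ} {D : ℝ≥0∞}

theorem measure_Ico_two_pow_mul_le
    (hΔ : ∀ t : ℝ, 0 < t → ν (Ico 0 (2 * t)) ≤ D * ν (Ico 0 t))
    {t : ℝ} (ht : 0 < t) (n : ℕ) :
    ν (Ico 0 (2 ^ n * t)) ≤ D ^ n * ν (Ico 0 t) := by
  induction n with
  | zero => simp
  | succ n ih =>
    calc ν (Ico 0 (2 ^ (n + 1) * t)) = ν (Ico 0 (2 * (2 ^ n * t))) := by ring_nf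
      _ ≤ D * ν (Ico 0 (2 ^ n * t)) := hΔ _ (by positivity)
      _ ≤ D * (D ^ n * ν (Ico 0 t)) := by gcongr
      _ = D ^ (n + 1) * ν (Ico 0 t) := by rw [pow_succ', mul_assoc]

theorem tsum_ofReal_exp_mul_pow_succ_ne_top (hD : D ≠ ⊤) :
    ∑' n : ℕ, ENNReal.ofReal (Real.exp (1 - 2 ^ n)) * D ^ (n + 1) ≠ ⊤ := by
  lift D to NNReal using hD
  have hterm : ∀ n : ℕ, ENNReal.ofReal (Real.exp (1 - 2 ^ n)) * (D : ℝ≥0∞) ^ (n + 1) =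
      ENNReal.ofReal (Real.exp 1 * D * ((D : ℝ) ^ n * Real.exp (-2 ^ n))) := by
    intro n
    rw [← ENNReal.ofReal_coe_nnreal, ← ENNReal.ofReal_pow D.coe_nonneg,
      ← ENNReal.ofReal_mul (Real.exp_pos _).le, sub_eq_add_neg, Real.exp_add]
    ring_nf
  simp only [hterm]
  rw [← ENNReal.ofReal_tsum_of_nonneg (fun n => by positivity)
    ((summable_pow_mul_exp_neg_two_pow D).mul_left _)]
  exact ENNReal.ofReal_ne_top

theorem setLIntegral_exp_neg_le_tsum_mul
    (hΔ : ∀ t : ℝ, 0 < t → ν (Ico 0 (2 * t)) ≤ D * ν (Ico 0 t)) {s : ℝ} (hs : 0 < s) :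
    ∫⁻ r in Ici 0, ENNReal.ofReal (Real.exp (-(r * s))) ∂ν ≤
      (∑' n : ℕ, ENNReal.ofReal (Real.exp (1 - 2 ^ n)) * D ^ (n + 1)) * ν (Ico 0 s⁻¹) := by
  calc ∫⁻ r in Ici 0, ENNReal.ofReal (Real.exp (-(r * s))) ∂ν
      ≤ ∫⁻ r in Ici 0, ∑' n : ℕ, (Ico 0 (2 ^ (n + 1) * s⁻¹)).indicator
          (fun _ => ENNReal.ofReal (Real.exp (1 - 2 ^ n))) r ∂ν :=
        setLIntegral_mono' measurableSet_Ici fun _ hr =>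
          ofReal_exp_neg_mul_le_tsum_indicator hr hs
    _ ≤ ∑' n : ℕ, ENNReal.ofReal (Real.exp (1 - 2 ^ n)) * ν (Ico 0 (2 ^ (n + 1) * s⁻¹)) := by
        rw [lintegral_tsum fun n => (measurable_const.indicator measurableSet_Ico).aemeasurable]
        gcongr with n
        rw [lintegral_indicator_const measurableSet_Ico]
        gcongr
        exact Measure.restrict_le_self
    _ ≤ ∑' n : ℕ, ENNReal.ofReal (Real.exp (1 - 2 ^ n)) * (D ^ (n + 1) * ν (Ico 0 s⁻¹)) := by
        gcongr with n
        exact measure_Ico_two_pow_mul_le hΔ (inv_pos.2 hs) _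
    _ = _ := by simp only [← mul_assoc, ENNReal.tsum_mul_right]

theorem measure_Ico_le_ofReal_exp_mul_setLIntegral {a s : ℝ} (hs : 0 ≤ s) :
    ν (Ico 0 a) ≤
      ENNReal.ofReal (Real.exp (a * s)) *
        ∫⁻ r in Ici 0, ENNReal.ofReal (Real.exp (-(r * s))) ∂ν := by
  calc ν (Ico 0 a) = ∫⁻ _ in Ico 0 a, 1 ∂ν := (setLIntegral_one _).symm
    _ ≤ ∫⁻ r in Ico 0 a, ENNReal.ofReal (Real.exp (a * s)) *
          ENNReal.ofReal (Real.exp (-(r * s))) ∂ν := by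
        refine setLIntegral_mono' measurableSet_Ico fun r hr => ?_
        rw [← ENNReal.ofReal_mul (Real.exp_pos _).le, ← Real.exp_add]
        exact ENNReal.one_le_ofReal.2 (Real.one_le_exp (by nlinarith [hr.2]))
    _ = ENNReal.ofReal (Real.exp (a * s)) *
          ∫⁻ r in Ico 0 a, ENNReal.ofReal (Real.exp (-(r * s))) ∂ν :=
        lintegral_const_mul _ (by fun_prop)
    _ ≤ _ := by gcongr; exact Ico_subset_Ici_self

end

theorem zen_weight_doubling_general (ν : Measure ℝ) (D : ℝ≥0∞) (hD : D ≠ ⊤)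
    (hΔ : ∀ t : ℝ, 0 < t → ν (Ico 0 (2 * t)) ≤ D * ν (Ico 0 t)) :
    ∃ c : ℝ, 0 < c ∧ ∀ t : ℝ, 0 < t →
      (∫⁻ r in Ici (0:ℝ), ENNReal.ofReal (Real.exp (-2 * r * t)) ∂ν) ≤
        ENNReal.ofReal c *
          ∫⁻ r in Ici (0:ℝ), ENNReal.ofReal (Real.exp (-2 * r * (2 * t))) ∂ν := by
  set K := ∑' n : ℕ, ENNReal.ofReal (Real.exp (1 - 2 ^ n)) * D ^ (n + 1)
  have hK : K * ENNReal.ofReal (Real.exp 2) ≠ ⊤ :=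
    mul_ne_top (tsum_ofReal_exp_mul_pow_succ_ne_top hD) ofReal_ne_top
  refine ⟨(K * ENNReal.ofReal (Real.exp 2)).toReal + 1, by positivity, fun t ht => ?_⟩
  simp only [show ∀ r t : ℝ, -2 * r * t = -(r * (2 * t)) from fun _ _ => by ring]
  have hexp : (2 * t)⁻¹ * (2 * (2 * t)) = 2 := by field_simp
  calc ∫⁻ r in Ici 0, ENNReal.ofReal (Real.exp (-(r * (2 * t)))) ∂ν
      ≤ K * ν (Ico 0 (2 * t)⁻¹) := setLIntegral_exp_neg_le_tsum_mul hΔ (by positivity)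
    _ ≤ K * (ENNReal.ofReal (Real.exp 2) *
          ∫⁻ r in Ici 0, ENNReal.ofReal (Real.exp (-(r * (2 * (2 * t))))) ∂ν) := by
        gcongr
        simpa only [hexp] using measure_Ico_le_ofReal_exp_mul_setLIntegral (ν := ν)
          (a := (2 * t)⁻¹) (s := 2 * (2 * t)) (by positivity)
    _ ≤ _ := by
        rw [← mul_assoc]
        gcongr
        exact (le_ofReal_iff_toReal_le hK (by positivity)).2
          (le_add_of_nonneg_right zero_le_one)

/-- under the Δ₂-condition `ν̃[0,2t) ≤ D·ν̃[0,t)`, the weight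
`w(t) = 2π ∫₀^∞ e^{-2rt} dν̃(r)` satisfies `w(t) ≤ c·w(2t)` for a constant `c > 0`.
(The factor `2π` cancels from both sides.) -/
theorem zen_weight_doubling (ν : Measure ℝ) (D : ℝ≥0∞) (hD : D ≠ ⊤)
    (hΔ : ∀ t : ℝ, 0 < t → ν (Ico 0 (2 * t)) ≤ D * ν (Ico 0 t))
    (hpos : ∀ t : ℝ, 0 < t → 0 < ν (Ico 0 t)) :
    ∃ c : ℝ, 0 < c ∧ ∀ t : ℝ, 0 < t →
      (∫⁻ r in Ici (0:ℝ), ENNReal.ofReal (Real.exp (-2 * r * t)) ∂ν) ≤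
        ENNReal.ofReal c *
          ∫⁻ r in Ici (0:ℝ), ENNReal.ofReal (Real.exp (-2 * r * (2 * t))) ∂ν :=
  zen_weight_doubling_general ν D hD hΔ
end

section
/- The function h(t) = 1/√t defines a bounded truncated Hankel operator (Γ_h u)(t) = ∫_0^T u(τ)/√(t+τ) dτ on L²(0,T) for every finite T > 0, but the corresponding Hankel operator on L²(0,∞) with the same kernel 1/√(t+τ) is unbounded. -/
open MeasureTheory Set Complex ENNReal

/-! On `(0, T]` the kernel is dominated by the separable kernel `t^(-1/4) τ^(-1/4)`, since
`√(tτ) ≤ t + τ`, and `t^(-1/4)` is square integrable on `(0, T]`; Cauchy–Schwarz in each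
variable then bounds the form by `‖t^(-1/4)‖₂² ‖f‖₂ ‖g‖₂`. On `(0, ∞)` the indicator of `(0, R]`
has squared norm `R` while its form is at least `R² / √(2R)`, which outgrows `C R`. -/

section

variable {α : Type*} [MeasurableSpace α] {μ : Measure α}

theorem lintegral_enorm_mul_enorm_le_eLpNorm_two_mul {E F : Type*} [NormedAddCommGroup E]
    [NormedAddCommGroup F] {w : α → E} {h : α → F}
    (hw : AEStronglyMeasurable w μ) (hh : AEStronglyMeasurable h μ) :
    ∫⁻ t, ‖w t‖ₑ * ‖h t‖ₑ ∂μ ≤ eLpNorm w 2 μ * eLpNorm h 2 μ := by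
  have := eLpNorm_le_eLpNorm_mul_eLpNorm'_of_norm (p := 2) (q := 2) (r := 1) hw hh
    (fun x y => ‖x‖ * ‖y‖) 1 (.of_forall fun t => by simp)
  simpa [eLpNorm_one_eq_lintegral_enorm, enorm_mul] using this

theorem enorm_integral_integral_le_of_norm_le_mul {𝕜 : Type*} [RCLike 𝕜] {K : α → α → 𝕜} {w : α → ℝ}
    (hw : AEStronglyMeasurable w μ) (hK : ∀ᵐ t ∂μ, ∀ᵐ τ ∂μ, ‖K t τ‖ ≤ w t * w τ)
    {f g : α → 𝕜} (hf : AEStronglyMeasurable f μ) (hg : AEStronglyMeasurable g μ) :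
    ‖∫ t, ∫ τ, K t τ * f t * starRingEnd 𝕜 (g τ) ∂μ ∂μ‖ₑ ≤
      eLpNorm w 2 μ ^ 2 * eLpNorm f 2 μ * eLpNorm g 2 μ := by
  calc ‖∫ t, ∫ τ, K t τ * f t * starRingEnd 𝕜 (g τ) ∂μ ∂μ‖ₑ
      ≤ ∫⁻ t, ∫⁻ τ, ‖K t τ * f t * starRingEnd 𝕜 (g τ)‖ₑ ∂μ ∂μ :=
        (enorm_integral_le_lintegral_enorm _).trans
          (lintegral_mono fun t => enorm_integral_le_lintegral_enorm _)
    _ ≤ ∫⁻ t, ∫⁻ τ, (‖w t‖ₑ * ‖f t‖ₑ) * (‖w τ‖ₑ * ‖g τ‖ₑ) ∂μ ∂μ := by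
        refine lintegral_mono_ae (hK.mono fun t ht => lintegral_mono_ae (ht.mono fun τ hτ => ?_))
        have hK' : ‖K t τ‖ₑ ≤ ‖w t‖ₑ * ‖w τ‖ₑ := by
          rw [← enorm_mul, enorm_le_iff_norm_le, Real.norm_eq_abs]
          exact hτ.trans (le_abs_self _)
        calc ‖K t τ * f t * starRingEnd 𝕜 (g τ)‖ₑ = ‖K t τ‖ₑ * ‖f t‖ₑ * ‖g τ‖ₑ := by
              rw [enorm_mul, enorm_mul, RCLike.enorm_conj]
          _ ≤ ‖w t‖ₑ * ‖w τ‖ₑ * ‖f t‖ₑ * ‖g τ‖ₑ := by gcongr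
          _ = _ := by ring
    _ = (∫⁻ t, ‖w t‖ₑ * ‖f t‖ₑ ∂μ) * ∫⁻ τ, ‖w τ‖ₑ * ‖g τ‖ₑ ∂μ :=
        lintegral_lintegral_mul (hw.enorm.mul hf.enorm) (hw.enorm.mul hg.enorm)
    _ ≤ (eLpNorm w 2 μ * eLpNorm f 2 μ) * (eLpNorm w 2 μ * eLpNorm g 2 μ) := by
        gcongr <;> exact lintegral_enorm_mul_enorm_le_eLpNorm_two_mul hw ‹_›
    _ = _ := by ring

theorem eLpNorm_indicator_one_two_mul_self {s : Set α} (hs : MeasurableSet s) :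
    eLpNorm (s.indicator fun _ => (1 : ℝ)) 2 μ * eLpNorm (s.indicator fun _ => (1 : ℝ)) 2 μ
      = μ s := by
  rw [eLpNorm_indicator_const hs two_ne_zero ofNat_ne_top, enorm_one, one_mul,
    ← ENNReal.rpow_add_of_nonneg _ _ (by norm_num) (by norm_num)]
  norm_num

end

theorem one_div_sqrt_add_le_rpow_mul_rpow {t τ : ℝ} (ht : 0 < t) (hτ : 0 < τ) :
    1 / Real.sqrt (t + τ) ≤ t ^ (-(1 / 4) : ℝ) * τ ^ (-(1 / 4) : ℝ) := by
  have hgm : Real.sqrt (t * τ) ≤ t + τ :=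
    Real.sqrt_le_iff.2 ⟨by positivity, by nlinarith⟩
  calc 1 / Real.sqrt (t + τ) = (t + τ) ^ (-(1 / 2) : ℝ) := by
        rw [Real.sqrt_eq_rpow, Real.rpow_neg (by positivity), one_div]
    _ ≤ Real.sqrt (t * τ) ^ (-(1 / 2) : ℝ) :=
        Real.rpow_le_rpow_of_nonpos (by positivity) hgm (by norm_num)
    _ = t ^ (-(1 / 4) : ℝ) * τ ^ (-(1 / 4) : ℝ) := by
        rw [Real.sqrt_eq_rpow, ← Real.rpow_mul (by positivity), Real.mul_rpow ht.le hτ.le]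
        norm_num

theorem memLp_two_rpow_neg_one_fourth_Ioc (T : ℝ) :
    MemLp (fun t : ℝ => t ^ (-(1 / 4) : ℝ)) 2 (volume.restrict (Ioc 0 T)) := by
  have hmeas : AEStronglyMeasurable (fun t : ℝ => t ^ (-(1 / 4) : ℝ))
      (volume.restrict (Ioc 0 T)) :=
    (measurable_id.pow_const _).aestronglyMeasurable
  refine (memLp_two_iff_integrable_sq hmeas).2 ?_
  have hint : IntegrableOn (fun t : ℝ => t ^ (-(1 / 2) : ℝ)) (Ioc 0 T) :=
    ((intervalIntegral.intervalIntegrable_rpow' (a := 0) (b := T) (by norm_num)).def'.mono_set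
      Ioc_subset_uIoc)
  refine hint.congr_fun (fun t ht => ?_) measurableSet_Ioc
  rw [← Real.rpow_natCast, ← Real.rpow_mul ht.1.le]
  norm_num

theorem ofReal_mul_div_sqrt_le_lintegral_indicator_kernel {R : ℝ} (hR : 0 < R) :
    ENNReal.ofReal (R * R / Real.sqrt (2 * R)) ≤
      ∫⁻ t in Ioi (0 : ℝ), ∫⁻ τ in Ioi (0 : ℝ), ENNReal.ofReal
        ((Ioc 0 R).indicator (fun _ => (1 : ℝ)) t * (Ioc 0 R).indicator (fun _ => (1 : ℝ)) τ /
          Real.sqrt (t + τ)) := by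
  have hkernel : ∀ t ∈ Ioc 0 R, ∀ τ ∈ Ioc 0 R, 1 / Real.sqrt (2 * R) ≤
      (Ioc 0 R).indicator (fun _ => (1 : ℝ)) t * (Ioc 0 R).indicator (fun _ => (1 : ℝ)) τ /
        Real.sqrt (t + τ) := by
    intro t ht τ hτ
    rw [indicator_of_mem ht, indicator_of_mem hτ, one_mul]
    exact one_div_le_one_div_of_le (Real.sqrt_pos.2 (add_pos ht.1 hτ.1))
      (Real.sqrt_le_sqrt (by linarith [ht.2, hτ.2]))
  calc ENNReal.ofReal (R * R / Real.sqrt (2 * R))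
      = ∫⁻ t in Ioc 0 R, ∫⁻ τ in Ioc 0 R, ENNReal.ofReal (1 / Real.sqrt (2 * R)) := by
        simp only [setLIntegral_const, Real.volume_Ioc, sub_zero]
        rw [← ENNReal.ofReal_mul (by positivity), ← ENNReal.ofReal_mul (by positivity)]
        ring_nf
    _ ≤ ∫⁻ t in Ioc 0 R, ∫⁻ τ in Ioc 0 R, ENNReal.ofReal
        ((Ioc 0 R).indicator (fun _ => (1 : ℝ)) t * (Ioc 0 R).indicator (fun _ => (1 : ℝ)) τ /
          Real.sqrt (t + τ)) :=
        setLIntegral_mono' measurableSet_Ioc fun t ht =>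
          setLIntegral_mono' measurableSet_Ioc fun τ hτ =>
            ENNReal.ofReal_le_ofReal (hkernel t ht τ hτ)
    _ ≤ _ := (lintegral_mono_set Ioc_subset_Ioi_self).trans
        (lintegral_mono fun t => lintegral_mono_set Ioc_subset_Ioi_self)

theorem hankel_sqrt_form_Ioc_bounded (T : ℝ) : ∃ C : ℝ, ∀ f g : ℝ → ℂ,
    MemLp f 2 (volume.restrict (Ioc 0 T)) → MemLp g 2 (volume.restrict (Ioc 0 T)) →
    (‖∫ t in Ioc (0:ℝ) T, ∫ τ in Ioc (0:ℝ) T,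
        ((1 / Real.sqrt (t + τ) : ℝ) : ℂ) * f t * (starRingEnd ℂ) (g τ)‖₊ : ℝ≥0∞) ≤
      ENNReal.ofReal C * eLpNorm f 2 (volume.restrict (Ioc 0 T)) *
        eLpNorm g 2 (volume.restrict (Ioc 0 T)) := by
  have hw := memLp_two_rpow_neg_one_fourth_Ioc T
  refine ⟨(eLpNorm (fun t : ℝ => t ^ (-(1 / 4) : ℝ)) 2 (volume.restrict (Ioc 0 T))).toReal ^ 2,
    fun f g hf hg => ?_⟩
  rw [ENNReal.ofReal_pow ENNReal.toReal_nonneg, ENNReal.ofReal_toReal hw.eLpNorm_ne_top]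
  refine enorm_integral_integral_le_of_norm_le_mul hw.1 ?_ hf.1 hg.1
  filter_upwards [ae_restrict_mem measurableSet_Ioc] with t ht
  filter_upwards [ae_restrict_mem measurableSet_Ioc] with τ hτ
  rw [Complex.norm_real, Real.norm_of_nonneg (by positivity)]
  exact one_div_sqrt_add_le_rpow_mul_rpow ht.1 hτ.1

theorem hankel_sqrt_form_Ioi_unbounded :
    ¬ ∃ C : ℝ, ∀ f g : ℝ → ℝ, (∀ t, 0 ≤ f t) → (∀ t, 0 ≤ g t) →
      MemLp f 2 (volume.restrict (Ioi 0)) → MemLp g 2 (volume.restrict (Ioi 0)) →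
      (∫⁻ t in Ioi (0:ℝ), ∫⁻ τ in Ioi (0:ℝ),
          ENNReal.ofReal (f t * g τ / Real.sqrt (t + τ))) ≤
        ENNReal.ofReal C * eLpNorm f 2 (volume.restrict (Ioi 0)) *
          eLpNorm g 2 (volume.restrict (Ioi 0)) := by
  rintro ⟨C, hC⟩
  have hgrowth : ∀ R : ℝ, 0 < R → R * R / Real.sqrt (2 * R) ≤ C * R := fun R hR => by
    have hf : MemLp ((Ioc 0 R).indicator fun _ => (1 : ℝ)) 2 (volume.restrict (Ioi 0)) :=
      memLp_indicator_const 2 measurableSet_Ioc 1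
        (.inr ((Measure.restrict_apply_le _ _).trans_lt measure_Ioc_lt_top).ne)
    have hf₀ : ∀ t, 0 ≤ (Ioc 0 R).indicator (fun _ => (1 : ℝ)) t :=
      indicator_nonneg fun _ _ => zero_le_one
    have hbound := (ofReal_mul_div_sqrt_le_lintegral_indicator_kernel hR).trans
      (hC _ _ hf₀ hf₀ hf hf)
    rw [mul_assoc (ENNReal.ofReal C), eLpNorm_indicator_one_two_mul_self measurableSet_Ioc,
      Measure.restrict_apply measurableSet_Ioc, inter_eq_left.2 Ioc_subset_Ioi_self,
      Real.volume_Ioc, sub_zero, ← ENNReal.ofReal_mul' hR.le,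
      ENNReal.ofReal_le_ofReal_iff'] at hbound
    exact hbound.resolve_right (not_le.2 (by positivity))
  obtain ⟨b, hCb, hb⟩ : ∃ b, C < b ∧ 0 < b := ⟨|C| + 1, by linarith [le_abs_self C], by positivity⟩
  have h := hgrowth (2 * b ^ 2) (by positivity)
  rw [show 2 * (2 * b ^ 2) = (2 * b) ^ 2 by ring, Real.sqrt_sq (by positivity),
    show 2 * b ^ 2 * (2 * b ^ 2) / (2 * b) = b * (2 * b ^ 2) by field_simp] at h
  nlinarith [mul_pos hb hb]

/-- the kernel `1/√(t+τ)` defines a bounded truncated Hankel form on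
`L²(0,T)` for every finite `T > 0`, but the corresponding Hankel form on `L²(0,∞)` is
unbounded (no constant `C` works, even for nonnegative functions). -/
theorem hankel_sqrt_kernel_bounded_finite_unbounded_infinite :
    (∀ T : ℝ, 0 < T → ∃ C : ℝ, ∀ f g : ℝ → ℂ,
      MemLp f 2 (volume.restrict (Ioc 0 T)) → MemLp g 2 (volume.restrict (Ioc 0 T)) →
      (‖∫ t in Ioc (0:ℝ) T, ∫ τ in Ioc (0:ℝ) T,
          ((1 / Real.sqrt (t + τ) : ℝ) : ℂ) * f t * (starRingEnd ℂ) (g τ)‖₊ : ℝ≥0∞) ≤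
        ENNReal.ofReal C * eLpNorm f 2 (volume.restrict (Ioc 0 T)) *
          eLpNorm g 2 (volume.restrict (Ioc 0 T))) ∧
    ¬ (∃ C : ℝ, ∀ f g : ℝ → ℝ, (∀ t, 0 ≤ f t) → (∀ t, 0 ≤ g t) →
      MemLp f 2 (volume.restrict (Ioi 0)) → MemLp g 2 (volume.restrict (Ioi 0)) →
      (∫⁻ t in Ioi (0:ℝ), ∫⁻ τ in Ioi (0:ℝ),
          ENNReal.ofReal (f t * g τ / Real.sqrt (t + τ))) ≤
        ENNReal.ofReal C * eLpNorm f 2 (volume.restrict (Ioi 0)) *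
          eLpNorm g 2 (volume.restrict (Ioi 0))) :=
  ⟨fun T _ => hankel_sqrt_form_Ioc_bounded T, hankel_sqrt_form_Ioi_unbounded⟩
end
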